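/- Limit of the higher-order jump contributions as the step size vanishes: let a_1,…,a_J ≥ 0 and δ_1,…,δ_J > 0 be real numbers and let c : ℕ^J → ℝ be bounded. For Δt > 0 define S(Δt) := Σ_{p ∈ ℕ^J, p ≠ 0} Δt^{|p|−1} · Π_{j=1}^J (a_j^{2p_j}/(p_j!·δ_j^{p_j})) · c(p), where |p| := Σ_{j=1}^J p_j. Then the series defining S(Δt) converges absolutely for every Δt > 0, and S(Δt) converges, as Δt → 0⁺, to Σ_{j=1}^J (a_j²/δ_j)·c(e_j), where e_j ∈ ℕ^J denotes the j-th standard unit vector. -/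

import Mathlib

noncomputable section

open scoped BigOperators Topology
open Real Filter

/-- Summand of the higher-order jump contributions:
`Δt^{|p|−1} · ∏_j (a_j^{2p_j}/(p_j! · δ_j^{p_j})) · c(p)`, where `|p| = ∑_j p_j`
(with `0^0 = 1`; natural subtraction in the exponent). -/
def hoTerm {J : ℕ} (a δ : Fin J → ℝ) (c : (Fin J → ℕ) → ℝ) (Δt : ℝ)
    (p : Fin J → ℕ) : ℝ :=
  Δt ^ ((∑ j, p j) - 1) *
    (∏ j, (a j) ^ (2 * p j) / (((p j).factorial : ℝ) * (δ j) ^ (p j))) * c p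

/-- The higher-order jump contribution
`S(Δt) = ∑_{p ∈ ℕ^J, p ≠ 0} Δt^{|p|−1} · ∏_j (a_j^{2p_j}/(p_j! δ_j^{p_j})) · c(p)`. -/
def hoS {J : ℕ} (a δ : Fin J → ℝ) (c : (Fin J → ℕ) → ℝ) (Δt : ℝ) : ℝ :=
  ∑' p : {p : Fin J → ℕ // p ≠ 0}, hoTerm a δ c Δt (p : Fin J → ℕ)

/-- Summability of products of summable nonnegative families over `Fin J → ℕ`. -/
lemma aux_summable_pi_prod : ∀ {J : ℕ} (f : Fin J → ℕ → ℝ), (∀ j n, 0 ≤ f j n) →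
    (∀ j, Summable (f j)) → Summable (fun p : Fin J → ℕ => ∏ j, f j (p j)) := by
  intro J
  induction J with
  | zero =>
    intro f _ _
    have : (fun p : Fin 0 → ℕ => ∏ j, f j (p j)) = fun _ => 1 := by
      funext p; simp
    rw [this]
    exact .of_finite
  | succ n ih =>
    intro f h0 hs
    have h1 : Summable (f 0) := hs 0
    have h2 : Summable (fun q : Fin n → ℕ => ∏ j, f j.succ (q j)) :=
      ih (fun j => f j.succ) (fun j k => h0 j.succ k) (fun j => hs j.succ)
    have h1' : 0 ≤ f 0 := fun k => h0 0 k
    have h2' : 0 ≤ fun q : Fin n → ℕ => ∏ j, f j.succ (q j) :=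
      fun q => Finset.prod_nonneg fun j _ => h0 j.succ (q j)
    have key := h1.mul_of_nonneg h2 h1' h2'
    have key2 : Summable (fun x : ℕ × (Fin n → ℕ) =>
        ∏ j, f j (Fin.cons (α := fun _ => ℕ) x.1 x.2 j)) := by
      refine key.congr fun x => ?_
      rw [Fin.prod_univ_succ]
      simp
    exact (Equiv.summable_iff (f := fun p : Fin (n+1) → ℕ => ∏ j, f j (p j))
      (Fin.consEquiv fun _ => ℕ)).1 (key2.congr fun x => rfl)

/-- A tuple of naturals summing to `1` is a standard unit vector. -/
lemma aux_eq_single {J : ℕ} (p : Fin J → ℕ) (h : ∑ j, p j = 1) :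
    ∃ j, p = Pi.single j 1 := by
  have hne : ∃ j, p j ≠ 0 := by
    by_contra hcon
    push_neg at hcon
    rw [Finset.sum_eq_zero (fun j _ => hcon j)] at h
    exact one_ne_zero h.symm
  obtain ⟨j, hj⟩ := hne
  have hle : p j ≤ 1 := h ▸ Finset.single_le_sum (f := p)
    (fun i _ => Nat.zero_le _) (Finset.mem_univ j)
  have hpj : p j = 1 := le_antisymm hle (Nat.one_le_iff_ne_zero.2 hj)
  refine ⟨j, funext fun i => ?_⟩
  rcases eq_or_ne i j with rfl | hij
  · simp [hpj]
  · have hsp := Finset.add_sum_erase Finset.univ p (Finset.mem_univ j)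
    have hrest : ∑ i ∈ Finset.univ.erase j, p i = 0 := by omega
    have hpi : p i = 0 :=
      (Finset.sum_eq_zero_iff).1 hrest i (Finset.mem_erase.2 ⟨hij, Finset.mem_univ i⟩)
    simp [Pi.single_eq_of_ne hij, hpi]

/-- The product part of `hoTerm`. -/
def hoP {J : ℕ} (a δ : Fin J → ℝ) (p : Fin J → ℕ) : ℝ :=
  ∏ j, (a j) ^ (2 * p j) / (((p j).factorial : ℝ) * (δ j) ^ (p j))

lemma hoTerm_eq {J : ℕ} (a δ : Fin J → ℝ) (c : (Fin J → ℕ) → ℝ) (t : ℝ) (p : Fin J → ℕ) :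
    hoTerm a δ c t p = t ^ ((∑ j, p j) - 1) * hoP a δ p * c p := rfl

lemma hoP_nonneg {J : ℕ} (a δ : Fin J → ℝ) (ha : ∀ j, 0 ≤ a j) (hδ : ∀ j, 0 < δ j)
    (p : Fin J → ℕ) : 0 ≤ hoP a δ p :=
  Finset.prod_nonneg fun j _ => div_nonneg (pow_nonneg (ha j) _)
    (mul_nonneg (Nat.cast_nonneg _) (pow_nonneg (hδ j).le _))

lemma hoG_summable {J : ℕ} (a δ : Fin J → ℝ) (hδ : ∀ j, 0 < δ j)
    (t : ℝ) (ht : 0 ≤ t) :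
    Summable (fun p : Fin J → ℕ => t ^ (∑ j, p j) * hoP a δ p) := by
  have hsum := aux_summable_pi_prod (fun j n => (t * ((a j) ^ 2 / δ j)) ^ n / n.factorial)
    (fun j n => div_nonneg
      (pow_nonneg (mul_nonneg ht (div_nonneg (sq_nonneg _) (hδ j).le)) _)
      (Nat.cast_nonneg _))
    (fun j => Real.summable_pow_div_factorial _)
  refine hsum.congr fun p => ?_
  rw [hoP, ← Finset.prod_pow_eq_pow_sum, ← Finset.prod_mul_distrib]
  refine Finset.prod_congr rfl fun j _ => ?_
  have hδ' : (δ j) ^ (p j) ≠ 0 := pow_ne_zero _ (hδ j).ne'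
  have hf' : ((p j).factorial : ℝ) ≠ 0 := Nat.cast_ne_zero.2 (p j).factorial_ne_zero
  rw [pow_mul]
  show (t * (a j ^ 2 / δ j)) ^ p j / ((p j).factorial : ℝ)
      = t ^ p j * ((a j ^ 2) ^ p j / (((p j).factorial : ℝ) * δ j ^ p j))
  rw [mul_pow, div_pow]
  field_simp

/-- **Limit of the higher-order jump contributions as the step size vanishes.**
For `a_j ≥ 0`, `δ_j > 0` and bounded `c : ℕ^J → ℝ`: the series defining `S(Δt)`
converges absolutely for every `Δt > 0`, and `S(Δt) → ∑_j (a_j²/δ_j)·c(e_j)` as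
`Δt → 0⁺`. -/
theorem higher_order_jump_contributions_limit
    {J : ℕ} (a δ : Fin J → ℝ) (ha : ∀ j, 0 ≤ a j) (hδ : ∀ j, 0 < δ j)
    (c : (Fin J → ℕ) → ℝ) (hc : ∃ C, ∀ p, |c p| ≤ C) :
    (∀ Δt : ℝ, 0 < Δt →
      Summable (fun p : {p : Fin J → ℕ // p ≠ 0} => |hoTerm a δ c Δt (p : Fin J → ℕ)|)) ∧
    Tendsto (hoS a δ c) (𝓝[>] 0)
      (𝓝 (∑ j, (a j) ^ 2 / δ j * c (Pi.single j 1))) := by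
  classical
  obtain ⟨C0, hC0⟩ := hc
  set C := max C0 0 with hCdef
  have hC : ∀ p, |c p| ≤ C := fun p => le_trans (hC0 p) (le_max_left _ _)
  have hCnn : (0:ℝ) ≤ C := le_max_right _ _
  have habs : ∀ (t : ℝ), 0 ≤ t → ∀ p : Fin J → ℕ,
      |hoTerm a δ c t p| ≤ C * (t ^ ((∑ j, p j) - 1) * hoP a δ p) := by
    intro t ht p
    rw [hoTerm_eq, abs_mul, abs_mul, abs_of_nonneg (pow_nonneg ht _),
      abs_of_nonneg (hoP_nonneg a δ ha hδ p)]
    calc t ^ ((∑ j, p j) - 1) * hoP a δ p * |c p|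
        ≤ t ^ ((∑ j, p j) - 1) * hoP a δ p * C :=
          mul_le_mul_of_nonneg_left (hC p)
            (mul_nonneg (pow_nonneg ht _) (hoP_nonneg a δ ha hδ p))
      _ = C * (t ^ ((∑ j, p j) - 1) * hoP a δ p) := by ring
  have part1 : ∀ Δt : ℝ, 0 < Δt →
      Summable (fun p : {p : Fin J → ℕ // p ≠ 0} => |hoTerm a δ c Δt (p : Fin J → ℕ)|) := by
    intro Δt hΔt
    have hpow : ∀ n : ℕ, Δt ^ (n - 1) ≤ max 1 Δt⁻¹ * Δt ^ n := by
      intro n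
      cases n with
      | zero => simpa using le_max_left 1 Δt⁻¹
      | succ m =>
        have h : Δt ^ (m + 1 - 1) = Δt⁻¹ * Δt ^ (m + 1) := by
          rw [Nat.add_sub_cancel, pow_succ]
          field_simp
        rw [h]
        exact mul_le_mul_of_nonneg_right (le_max_right _ _) (pow_nonneg hΔt.le _)
    have hdom : Summable (fun p : Fin J → ℕ =>
        (C * max 1 Δt⁻¹) * (Δt ^ (∑ j, p j) * hoP a δ p)) :=
      (hoG_summable a δ hδ Δt hΔt.le).mul_left _
    refine Summable.of_nonneg_of_le (fun p => abs_nonneg _) ?_ (hdom.subtype _)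
    intro p
    calc |hoTerm a δ c Δt (p : Fin J → ℕ)|
        ≤ C * (Δt ^ ((∑ j, (p : Fin J → ℕ) j) - 1) * hoP a δ (p : Fin J → ℕ)) :=
          habs Δt hΔt.le _
      _ ≤ C * ((max 1 Δt⁻¹ * Δt ^ (∑ j, (p : Fin J → ℕ) j)) * hoP a δ (p : Fin J → ℕ)) :=
          mul_le_mul_of_nonneg_left
            (mul_le_mul_of_nonneg_right (hpow _) (hoP_nonneg a δ ha hδ _)) hCnn
      _ = (C * max 1 Δt⁻¹) * (Δt ^ (∑ j, (p : Fin J → ℕ) j) * hoP a δ (p : Fin J → ℕ)) := by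
          ring
  set T1 := ∑ j, (a j) ^ 2 / δ j * c (Pi.single j 1) with hT1def
  refine ⟨part1, ?_⟩
  have hPsum : Summable (fun p : Fin J → ℕ => hoP a δ p) := by
    refine (hoG_summable a δ hδ 1 zero_le_one).congr fun p => ?_
    simp
  set K := ∑' p : Fin J → ℕ, hoP a δ p with hKdef
  have key : ∀ t : ℝ, 0 < t → t ≤ 1 → |hoS a δ c t - T1| ≤ C * K * t := by
    intro t ht ht1
    set F1 : {p : Fin J → ℕ // p ≠ 0} → ℝ :=
      fun p => if (∑ j, (p : Fin J → ℕ) j) = 1 then hoTerm a δ c 1 (p : Fin J → ℕ) else 0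
      with hF1def
    set F2 : {p : Fin J → ℕ // p ≠ 0} → ℝ :=
      fun p => if (∑ j, (p : Fin J → ℕ) j) = 1 then 0 else hoTerm a δ c t (p : Fin J → ℕ)
      with hF2def
    have hpt : ∀ p : {p : Fin J → ℕ // p ≠ 0},
        hoTerm a δ c t (p : Fin J → ℕ) = F1 p + F2 p := by
      intro p
      by_cases hn : (∑ j, (p : Fin J → ℕ) j) = 1
      · simp only [hF1def, hF2def, if_pos hn, add_zero]
        rw [hoTerm_eq, hoTerm_eq, hn]
        norm_num
      · simp only [hF1def, hF2def, if_neg hn, zero_add]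
    have hF1sum : Summable F1 := by
      refine Summable.of_abs (Summable.of_nonneg_of_le (fun p => abs_nonneg _) ?_
        (part1 1 one_pos))
      intro p
      simp only [hF1def]
      split
      · exact le_rfl
      · simpa using abs_nonneg (hoTerm a δ c 1 (p : Fin J → ℕ))
    have hF2sum : Summable F2 := by
      refine Summable.of_abs (Summable.of_nonneg_of_le (fun p => abs_nonneg _) ?_
        (part1 t ht))
      intro p
      simp only [hF2def]
      split
      · simpa using abs_nonneg (hoTerm a δ c t (p : Fin J → ℕ))
      · exact le_rfl
    have hsplit : hoS a δ c t = (∑' p, F1 p) + (∑' p, F2 p) := by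
      have h1 : hoS a δ c t = ∑' p : {p : Fin J → ℕ // p ≠ 0}, (F1 p + F2 p) :=
        tsum_congr hpt
      rw [h1, Summable.tsum_add hF1sum hF2sum]
    have hne0 : ∀ j : Fin J, (Pi.single j 1 : Fin J → ℕ) ≠ 0 := by
      intro j h
      have := congrFun h j
      simp at this
    have hsum1j : ∀ j : Fin J, (∑ i, (Pi.single j 1 : Fin J → ℕ) i) = 1 := by
      intro j
      simp [Pi.single_apply]
    have hS1 : (∑' p, F1 p) = T1 := by
      have h0 : ∀ p ∉ (Finset.univ.image
          (fun j : Fin J => (⟨Pi.single j 1, hne0 j⟩ : {p : Fin J → ℕ // p ≠ 0}))),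
          F1 p = 0 := by
        intro p hp
        by_cases hn : (∑ j, (p : Fin J → ℕ) j) = 1
        · obtain ⟨j, hj⟩ := aux_eq_single _ hn
          exact absurd (Finset.mem_image.2 ⟨j, Finset.mem_univ j, Subtype.ext hj.symm⟩) hp
        · simp [hF1def, hn]
      rw [tsum_eq_sum h0, Finset.sum_image (fun j _ j' _ hjj => ?_)]
      · refine Finset.sum_congr rfl fun j _ => ?_
        rw [hF1def]
        simp only [if_pos (hsum1j j)]
        rw [hoTerm_eq, hsum1j j]
        have hprod : hoP a δ (Pi.single j 1) = a j ^ 2 / δ j := by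
          rw [hoP]
          rw [Finset.prod_eq_single j (fun i _ hij => by
            simp [Pi.single_eq_of_ne hij]) (fun h => absurd (Finset.mem_univ j) h)]
          simp [Nat.factorial]
        rw [hprod]
        norm_num
      · have h' : (Pi.single j 1 : Fin J → ℕ) = Pi.single j' 1 := congrArg Subtype.val hjj
        by_contra hne
        have := congrFun h' j
        rw [Pi.single_eq_same, Pi.single_eq_of_ne hne] at this
        exact one_ne_zero this
    have hF2bound : ∀ p : {p : Fin J → ℕ // p ≠ 0},
        |F2 p| ≤ C * t * hoP a δ (p : Fin J → ℕ) := by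
      intro p
      simp only [hF2def]
      split_ifs with hn
      · simpa using mul_nonneg (mul_nonneg hCnn ht.le) (hoP_nonneg a δ ha hδ _)
      · have hn1 : 1 ≤ ∑ j, (p : Fin J → ℕ) j := by
          obtain ⟨j, hj⟩ := Function.ne_iff.1 p.2
          have h1 : 1 ≤ (p : Fin J → ℕ) j := Nat.one_le_iff_ne_zero.2 (by simpa using hj)
          exact le_trans h1 (Finset.single_le_sum (fun i _ => Nat.zero_le _) (Finset.mem_univ j))
        have hn2 : 1 ≤ (∑ j, (p : Fin J → ℕ) j) - 1 := by omega
        have hp1 : t ^ ((∑ j, (p : Fin J → ℕ) j) - 1) ≤ t := by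
          calc t ^ ((∑ j, (p : Fin J → ℕ) j) - 1) ≤ t ^ 1 :=
                pow_le_pow_of_le_one ht.le ht1 hn2
            _ = t := pow_one t
        calc |hoTerm a δ c t (p : Fin J → ℕ)|
            ≤ C * (t ^ ((∑ j, (p : Fin J → ℕ) j) - 1) * hoP a δ (p : Fin J → ℕ)) :=
              habs t ht.le _
          _ ≤ C * (t * hoP a δ (p : Fin J → ℕ)) :=
              mul_le_mul_of_nonneg_left
                (mul_le_mul_of_nonneg_right hp1 (hoP_nonneg a δ ha hδ _)) hCnn
          _ = C * t * hoP a δ (p : Fin J → ℕ) := by ring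
    have hrhs_sum : Summable (fun p : {p : Fin J → ℕ // p ≠ 0} =>
        C * t * hoP a δ (p : Fin J → ℕ)) :=
      by
      have h := (hPsum.mul_left (C * t)).subtype {p : Fin J → ℕ | p ≠ 0}
      exact h
    have hsum2abs : Summable (fun p => |F2 p|) := hF2sum.abs
    have htail : |∑' p, F2 p| ≤ C * K * t := by
      have h1 : Summable (fun p : {p : Fin J → ℕ // p ≠ 0} => ‖F2 p‖) := by
        simpa [Real.norm_eq_abs] using hsum2abs
      calc |∑' p, F2 p| ≤ ∑' p, |F2 p| := by
            simpa [Real.norm_eq_abs] using norm_tsum_le_tsum_norm (f := F2) h1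
        _ ≤ ∑' p : {p : Fin J → ℕ // p ≠ 0}, C * t * hoP a δ (p : Fin J → ℕ) :=
            Summable.tsum_le_tsum hF2bound hsum2abs hrhs_sum
        _ = (C * t) * ∑' p : {p : Fin J → ℕ // p ≠ 0}, hoP a δ (p : Fin J → ℕ) := by
            rw [tsum_mul_left]
        _ ≤ (C * t) * K := by
            refine mul_le_mul_of_nonneg_left ?_ (mul_nonneg hCnn ht.le)
            rw [hKdef]
            exact Summable.tsum_subtype_le (fun p : Fin J → ℕ => hoP a δ p)
              {p : Fin J → ℕ | p ≠ 0} (fun p => hoP_nonneg a δ ha hδ p) hPsum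
        _ = C * K * t := by ring
    rw [hsplit, hS1]
    simpa using htail
  have hKT : Tendsto (fun s : ℝ => C * K * s) (𝓝[>] (0:ℝ)) (𝓝 0) := by
    have h1 : Tendsto (fun s : ℝ => C * K * s) (𝓝 0) (𝓝 (C * K * 0)) :=
      (continuous_const.mul continuous_id).tendsto 0
    rw [mul_zero] at h1
    exact h1.mono_left nhdsWithin_le_nhds
  have hsub : Tendsto (fun s => hoS a δ c s - T1) (𝓝[>] (0:ℝ)) (𝓝 0) := by
    refine squeeze_zero_norm' ?_ hKT
    filter_upwards [Ioc_mem_nhdsGT_of_mem (Set.left_mem_Ico.2 one_pos)] with s hs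
    rw [Real.norm_eq_abs]
    exact key s hs.1 hs.2
  have hfin := hsub.add (tendsto_const_nhds (x := T1))
  simpa using hfin
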